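/- arXiv:1010.5577 — 3 statements merged into one kernel-verified Lean document; each statement's English description precedes it below -/
import Mathlib

section
/- Let ρ be a density operator on a finite-dimensional complex Hilbert space H, let M be a projective measurement on H, let 𝔼 = E_1,…,E_k be a sequence of events all of which are defined by the measurement M (i.e. each E_i = {M ∈ A_i} for some A_i ⊆ spec(M)), and let 𝔼′ be a permutation of the sequence 𝔼. Then Pr_ρ[𝔼] = Pr_ρ[𝔼′]. -/
/-! For a projective measurement `Pₙ Pₘ = δₘₙ Pₘ`, so applying `{M ∈ A}` and then `{M ∈ B}`
is applying `{M ∈ A ∩ B}`. Hence the superoperators of events defined by `M` commute, and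
`Pr_ρ`, a left fold of these superoperators over the sequence, is invariant under permutation. -/

open Matrix Finset
open scoped ComplexOrder

/-- A quantum measurement on `ℂ^d`: a finite family of operators indexed by the
outcomes in `spec`, satisfying the completeness condition `∑ Mₘ† Mₘ = I`. -/
structure Measurement (d : ℕ) where
  spec : Finset ℕ
  op : ℕ → Matrix (Fin d) (Fin d) ℂ
  complete : ∑ m ∈ spec, (op m)ᴴ * op m = 1

/-- An event `{M ∈ A}`: a measurement together with a subset of its spectrum. -/
structure QEvent (d : ℕ) where
  meas : Measurement d
  A : Finset ℕ
  sub : A ⊆ meas.spec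

/-- The super-operator defined by an event: `ρ ↦ ∑_{m ∈ A} Mₘ ρ Mₘ†`. -/
noncomputable def QEvent.superop {d : ℕ} (E : QEvent d) (ρ : Matrix (Fin d) (Fin d) ℂ) :
    Matrix (Fin d) (Fin d) ℂ :=
  ∑ m ∈ E.A, E.meas.op m * ρ * (E.meas.op m)ᴴ

/-- The probability of a sequence of events in state `ρ`:
`Pr_ρ[E₁,…,E_k] = tr(𝓔_k(⋯𝓔₁(ρ)⋯))`. -/
noncomputable def PrSeq {d : ℕ} (ρ : Matrix (Fin d) (Fin d) ℂ) (Es : List (QEvent d)) : ℝ :=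
  (Matrix.trace (Es.foldl (fun σ E => E.superop σ) ρ)).re

/-- A density operator: positive semidefinite with trace one. -/
def IsDensityOp {d : ℕ} (ρ : Matrix (Fin d) (Fin d) ℂ) : Prop :=
  ρ.PosSemidef ∧ ρ.trace = 1

/-- A projective measurement: every operator is an orthogonal projection and
distinct operators are orthogonal. -/
def Measurement.IsProjective {d : ℕ} (M : Measurement d) : Prop :=
  (∀ m ∈ M.spec, (M.op m)ᴴ = M.op m ∧ M.op m * M.op m = M.op m) ∧
  ∀ m ∈ M.spec, ∀ m' ∈ M.spec, m ≠ m' → M.op m * M.op m' = 0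

/-- The complete event `I_M = {M ∈ spec(M)}`. -/
def completeEvent {d : ℕ} (M : Measurement d) : QEvent d :=
  ⟨M, M.spec, subset_rfl⟩

/-- The complement `Ē = {M ∈ spec(M) \ A}` of the event `E = {M ∈ A}`. -/
def QEvent.compl {d : ℕ} (E : QEvent d) : QEvent d :=
  ⟨E.meas, E.meas.spec \ E.A, Finset.sdiff_subset⟩

/-- Conditional probability `Pr_ρ[𝔽|𝔼] = Pr_ρ[𝔼,𝔽] / Pr_ρ[𝔼]`. -/
noncomputable def condPrSeq {d : ℕ} (ρ : Matrix (Fin d) (Fin d) ℂ) (Fs Es : List (QEvent d)) : ℝ :=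
  PrSeq ρ (Es ++ Fs) / PrSeq ρ Es

namespace Measurement.IsProjective

variable {d : ℕ} {M : Measurement d}

lemma op_mul_op (hM : M.IsProjective) {m n : ℕ} (hm : m ∈ M.spec) (hn : n ∈ M.spec) :
    M.op n * M.op m = if m = n then M.op m else 0 := by
  split_ifs with h
  · subst h
    exact (hM.1 m hm).2
  · exact hM.2 n hn m hm (Ne.symm h)

lemma op_sandwich_op_sandwich (hM : M.IsProjective) {m n : ℕ} (hm : m ∈ M.spec)
    (hn : n ∈ M.spec) (ρ : Matrix (Fin d) (Fin d) ℂ) :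
    M.op n * (M.op m * ρ * (M.op m)ᴴ) * (M.op n)ᴴ
      = if m = n then M.op m * ρ * (M.op m)ᴴ else 0 := by
  have hmn := hM.op_mul_op hm hn
  have hnm := hM.op_mul_op hn hm
  calc M.op n * (M.op m * ρ * (M.op m)ᴴ) * (M.op n)ᴴ
      = (M.op n * M.op m) * ρ * (M.op n * M.op m)ᴴ := by
        simp only [conjTranspose_mul]; noncomm_ring
    _ = if m = n then M.op m * ρ * (M.op m)ᴴ else 0 := by
        rw [hmn]; split_ifs <;> simp

lemma superop_superop (hM : M.IsProjective) {E F : QEvent d} (hE : E.meas = M)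
    (hF : F.meas = M) (ρ : Matrix (Fin d) (Fin d) ℂ) :
    F.superop (E.superop ρ) = ∑ m ∈ E.A ∩ F.A, M.op m * ρ * (M.op m)ᴴ := by
  have hEA : E.A ⊆ M.spec := hE ▸ E.sub
  have hFA : F.A ⊆ M.spec := hF ▸ F.sub
  simp only [QEvent.superop, hE, hF, Finset.mul_sum, Finset.sum_mul]
  rw [Finset.sum_comm]
  calc ∑ m ∈ E.A, ∑ n ∈ F.A, M.op n * (M.op m * ρ * (M.op m)ᴴ) * (M.op n)ᴴ
      = ∑ m ∈ E.A, ∑ n ∈ F.A, if m = n then M.op m * ρ * (M.op m)ᴴ else 0 :=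
        Finset.sum_congr rfl fun m hm => Finset.sum_congr rfl fun n hn =>
          hM.op_sandwich_op_sandwich (hEA hm) (hFA hn) ρ
    _ = ∑ m ∈ E.A ∩ F.A, M.op m * ρ * (M.op m)ᴴ := by
        simp only [Finset.sum_ite_eq, Finset.sum_ite_mem]

lemma superop_comm (hM : M.IsProjective) {E F : QEvent d} (hE : E.meas = M)
    (hF : F.meas = M) (ρ : Matrix (Fin d) (Fin d) ℂ) :
    F.superop (E.superop ρ) = E.superop (F.superop ρ) := by
  rw [hM.superop_superop hE hF, hM.superop_superop hF hE, Finset.inter_comm]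

end Measurement.IsProjective

theorem prSeq_perm_of_projective_general {d : ℕ} (ρ : Matrix (Fin d) (Fin d) ℂ)
    (M : Measurement d) (hM : M.IsProjective)
    (Es Es' : List (QEvent d)) (hmeas : ∀ E ∈ Es, E.meas = M)
    (hperm : Es.Perm Es') :
    PrSeq ρ Es = PrSeq ρ Es' := by
  unfold PrSeq
  rw [hperm.foldl_eq' fun E hE F hF σ => hM.superop_comm (hmeas E hE) (hmeas F hF) σ]

/-- Proposition 1.1: if all events in the sequence `Es` are defined by
the same projective measurement `M`, and `Es'` is a permutation of `Es`, then
`Pr_ρ[Es] = Pr_ρ[Es']`. -/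
theorem prSeq_perm_of_projective {d : ℕ} (ρ : Matrix (Fin d) (Fin d) ℂ)
    (hρ : IsDensityOp ρ) (M : Measurement d) (hM : M.IsProjective)
    (Es Es' : List (QEvent d)) (hmeas : ∀ E ∈ Es, E.meas = M)
    (hperm : Es.Perm Es') :
    PrSeq ρ Es = PrSeq ρ Es' :=
  prSeq_perm_of_projective_general ρ M hM Es Es' hmeas hperm
end

section
/- Let Σ = (ρ; M_1,…,M_n) be a test on a finite-dimensional complex Hilbert space H, let E_1,…,E_n be events with E_i defined by M_i for each i, let K < L be subsequences of (n] with Pr_Σ[𝔼_K] ≠ 0, and let J be any subsequence of L. Then the full monotonicity of conditional probability in a test holds: Pr_Σ[𝔼_L | 𝔼_K] ≤ Pr_Σ[𝔼_J | 𝔼_K]. -/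
open Matrix Finset
open scoped ComplexOrder

/-- The list of events realizing `Pr_Σ[𝔼_K]` in the test `Σ = (ρ; M₁,…,M_n)`:
all measurements `M₁,…,M_{max K}` are performed; at the indices `i ∈ K` the event
`E i` is used, while at the remaining indices the complete event `I_{M_i}` is used. -/
noncomputable def testList {d : ℕ} (n : ℕ) (Ms : ℕ → Measurement d) (E : ℕ → QEvent d)
    (K : Finset ℕ) : List (QEvent d) :=
  ((List.range' 1 n).filter (fun i => decide (∃ k ∈ K, i ≤ k))).map
    (fun i => if i ∈ K then E i else completeEvent (Ms i))

/-- The probability `Pr_Σ[𝔼_K]` of the subsequence of events indexed by `K` in the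
test `Σ = (ρ; M₁,…,M_n)`. -/
noncomputable def PrTest {d : ℕ} (ρ : Matrix (Fin d) (Fin d) ℂ) (n : ℕ)
    (Ms : ℕ → Measurement d) (E : ℕ → QEvent d) (K : Finset ℕ) : ℝ :=
  PrSeq ρ (testList n Ms E K)

/-- The conditional probability `Pr_Σ[𝔼_L | 𝔼_K]` in a test (for `K < L`, the
concatenation `𝔼_K,𝔼_L` is the subsequence indexed by `K ∪ L`). -/
noncomputable def condPrTest {d : ℕ} (ρ : Matrix (Fin d) (Fin d) ℂ) (n : ℕ)
    (Ms : ℕ → Measurement d) (E : ℕ → QEvent d) (L K : Finset ℕ) : ℝ :=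
  PrTest ρ n Ms E (K ∪ L) / PrTest ρ n Ms E K

/-- Independence `Ind_Σ(E_i | 𝔼_J; 𝔼_{K∖J})`: `Pr_Σ[E_i|𝔼_K] = Pr_Σ[E_i|𝔼_{K∖J}]`. -/
def IndTest {d : ℕ} (ρ : Matrix (Fin d) (Fin d) ℂ) (n : ℕ)
    (Ms : ℕ → Measurement d) (E : ℕ → QEvent d) (i : ℕ) (J K : Finset ℕ) : Prop :=
  condPrTest ρ n Ms E {i} K = condPrTest ρ n Ms E {i} (K \ J)

/-- Negative independence `NInd_Σ(E_i | 𝔼_K)`: `Pr_Σ[E_i | Ē_K] = Pr_Σ[E_i]`,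
where in the conditioning sequence every event of `𝔼_K` is replaced by its complement. -/
def NIndTest {d : ℕ} (ρ : Matrix (Fin d) (Fin d) ℂ) (n : ℕ)
    (Ms : ℕ → Measurement d) (E : ℕ → QEvent d) (i : ℕ) (K : Finset ℕ) : Prop :=
  condPrTest ρ n Ms (Function.update (fun k => (E k).compl) i (E i)) {i} K
    = PrTest ρ n Ms E {i}

/-- `NInd_{Σ,𝔼}(k|l)`: `NInd_Σ(E_k | E₁,…,E_j)` for all `1 ≤ j ≤ l`. -/
def NIndSeq {d : ℕ} (ρ : Matrix (Fin d) (Fin d) ℂ) (n : ℕ)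
    (Ms : ℕ → Measurement d) (E : ℕ → QEvent d) (k l : ℕ) : Prop :=
  ∀ j, 1 ≤ j → j ≤ l → NIndTest ρ n Ms E k (Finset.Icc 1 j)

/-!
Every event superoperator `ρ ↦ ∑_{m ∈ A} Mₘ ρ Mₘ†` is monotone in the Loewner order and never
increases the trace, and enlarging `A` enlarges it. Since `J ⊆ L`, the sequence of events computing
`Pr_Σ[𝔼_K, 𝔼_L]` starts with the sequence computing `Pr_Σ[𝔼_K, 𝔼_J]`, except that at the indices
of `L ∖ J` it has `E_i` where the other has the complete event `I_{M_i}`, and it may continue past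
the other's end. Hence the numerator on the left is the smaller one, while the denominators agree.
-/

open scoped MatrixOrder

lemma re_trace_le_re_trace {ι : Type*} [Fintype ι] {σ τ : Matrix ι ι ℂ} (h : σ ≤ τ) :
    σ.trace.re ≤ τ.trace.re :=
  (Complex.le_def.mp ((tracePositiveLinearMap ι ℝ ℂ).monotone h)).1

namespace QEvent

variable {d : ℕ}

def Refines (F G : QEvent d) : Prop :=
  F.meas = G.meas ∧ F.A ⊆ G.A

lemma Refines.refl (F : QEvent d) : F.Refines F :=
  ⟨rfl, subset_rfl⟩

lemma refines_completeEvent (F : QEvent d) : F.Refines (completeEvent F.meas) :=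
  ⟨rfl, F.sub⟩

lemma superop_nonneg (F : QEvent d) {ρ : Matrix (Fin d) (Fin d) ℂ} (hρ : 0 ≤ ρ) :
    0 ≤ F.superop ρ :=
  sum_nonneg fun _ _ => (hρ.posSemidef.mul_mul_conjTranspose_same _).nonneg

lemma superop_le_superop {F G : QEvent d} (hFG : F.Refines G)
    {σ τ : Matrix (Fin d) (Fin d) ℂ} (hσ : 0 ≤ σ) (hστ : σ ≤ τ) :
    F.superop σ ≤ G.superop τ := by
  obtain ⟨hM, hA⟩ := hFG
  unfold superop
  rw [hM]
  calc ∑ m ∈ F.A, G.meas.op m * σ * (G.meas.op m)ᴴ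
      ≤ ∑ m ∈ F.A, G.meas.op m * τ * (G.meas.op m)ᴴ :=
        sum_le_sum fun _ _ => by
          rw [le_iff, ← Matrix.sub_mul, ← Matrix.mul_sub]
          exact hστ.mul_mul_conjTranspose_same _
    _ ≤ ∑ m ∈ G.A, G.meas.op m * τ * (G.meas.op m)ᴴ :=
        sum_le_sum_of_subset_of_nonneg hA fun _ _ _ =>
          ((hσ.trans hστ).posSemidef.mul_mul_conjTranspose_same _).nonneg

end QEvent

lemma trace_superop_completeEvent {d : ℕ} (M : Measurement d) (ρ : Matrix (Fin d) (Fin d) ℂ) :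
    ((completeEvent M).superop ρ).trace = ρ.trace := by
  calc ((completeEvent M).superop ρ).trace
      = ∑ m ∈ M.spec, ((M.op m)ᴴ * M.op m * ρ).trace := by
        rw [QEvent.superop, trace_sum]
        exact sum_congr rfl fun m _ => by rw [completeEvent, trace_mul_cycle, trace_mul_cycle]
    _ = ρ.trace := by
        rw [← trace_sum, ← sum_mul, M.complete, one_mul]

lemma re_trace_superop_le {d : ℕ} (F : QEvent d) {ρ : Matrix (Fin d) (Fin d) ℂ} (hρ : 0 ≤ ρ) :
    (F.superop ρ).trace.re ≤ ρ.trace.re := by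
  rw [← trace_superop_completeEvent F.meas ρ]
  exact re_trace_le_re_trace (QEvent.superop_le_superop F.refines_completeEvent hρ le_rfl)

section PrSeq

variable {d : ℕ}

lemma PrSeq_nonneg {ρ : Matrix (Fin d) (Fin d) ℂ} (hρ : 0 ≤ ρ) (Es : List (QEvent d)) :
    0 ≤ PrSeq ρ Es := by
  induction Es generalizing ρ with
  | nil => simpa [PrSeq] using re_trace_le_re_trace hρ
  | cons F Es ih => exact ih (F.superop_nonneg hρ)

lemma PrSeq_le_trace {ρ : Matrix (Fin d) (Fin d) ℂ} (hρ : 0 ≤ ρ) (Es : List (QEvent d)) :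
    PrSeq ρ Es ≤ ρ.trace.re := by
  induction Es generalizing ρ with
  | nil => exact le_rfl
  | cons F Es ih =>
    exact (ih (F.superop_nonneg hρ)).trans (re_trace_superop_le F hρ)

lemma PrSeq_append_le_of_forall₂ {Fs Gs : List (QEvent d)}
    (hFG : List.Forall₂ QEvent.Refines Fs Gs) (Hs : List (QEvent d))
    {σ τ : Matrix (Fin d) (Fin d) ℂ} (hσ : 0 ≤ σ) (hστ : σ ≤ τ) :
    PrSeq σ (Fs ++ Hs) ≤ PrSeq τ Gs := by
  induction hFG generalizing σ τ with
  | nil =>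
    exact (PrSeq_le_trace hσ Hs).trans (re_trace_le_re_trace hστ)
  | cons hFG _ ih =>
    exact ih (QEvent.superop_nonneg _ hσ) (QEvent.superop_le_superop hFG hσ hστ)

end PrSeq

lemma List.filter_prefix_filter {α : Type*} {l : List α} {p q : α → Bool}
    (hqp : ∀ x ∈ l, q x → p x) (hq : l.Pairwise fun x y => q y → q x) :
    l.filter q <+: l.filter p := by
  induction l with
  | nil => exact List.prefix_rfl
  | cons a l ih =>
    obtain ⟨ha, hl⟩ := List.pairwise_cons.mp hq
    by_cases hqa : q a
    · rw [List.filter_cons_of_pos hqa, List.filter_cons_of_pos (hqp a (by simp) hqa)]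
      exact (List.prefix_cons_inj a).mpr (ih (fun x hx => hqp x (by simp [hx])) hl)
    · have : (a :: l).filter q = [] :=
        List.filter_eq_nil_iff.mpr fun x hx hqx => hqa <| by
          rcases List.mem_cons.mp hx with rfl | hx
          exacts [hqx, ha x hx hqx]
      rw [this]
      exact List.nil_prefix

lemma testEvent_refines {d : ℕ} {Ms : ℕ → Measurement d} {E : ℕ → QEvent d} {S T : Finset ℕ}
    (hST : S ⊆ T) {i : ℕ} (hi : (E i).meas = Ms i) :
    (if i ∈ T then E i else completeEvent (Ms i)).Refines
      (if i ∈ S then E i else completeEvent (Ms i)) := by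
  by_cases hiS : i ∈ S
  · simp only [hiS, hST hiS, if_true]
    exact QEvent.Refines.refl _
  · by_cases hiT : i ∈ T
    · simp only [hiS, hiT, if_true, if_false]
      exact hi ▸ (E i).refines_completeEvent
    · simp only [hiS, hiT, if_false]
      exact QEvent.Refines.refl _

lemma PrTest_anti {d : ℕ} {ρ : Matrix (Fin d) (Fin d) ℂ} (hρ : 0 ≤ ρ) {n : ℕ}
    {Ms : ℕ → Measurement d} {E : ℕ → QEvent d} (hE : ∀ k ∈ Icc 1 n, (E k).meas = Ms k)
    {S T : Finset ℕ} (hST : S ⊆ T) :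
    PrTest ρ n Ms E T ≤ PrTest ρ n Ms E S := by
  obtain ⟨Hs, hHs⟩ : ((List.range' 1 n).filter fun i => decide (∃ k ∈ S, i ≤ k)) <+:
      (List.range' 1 n).filter fun i => decide (∃ k ∈ T, i ≤ k) :=
    List.filter_prefix_filter
      (fun _ _ => by simpa using fun k hk hik => ⟨k, hST hk, hik⟩)
      ((List.pairwise_lt_range' (s := 1) (n := n)).imp fun hij => by
        simpa using fun k hk hjk => ⟨k, hk, hij.le.trans hjk⟩)
  unfold PrTest testList
  rw [← hHs, List.map_append]
  refine PrSeq_append_le_of_forall₂ ?_ _ hρ le_rfl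
  rw [List.forall₂_map_left_iff, List.forall₂_map_right_iff, List.forall₂_same]
  intro i hmem
  have hi : i ∈ Icc 1 n := by
    have := List.mem_range'_1.mp (List.mem_filter.mp hmem).1
    simp only [mem_Icc]
    omega
  exact testEvent_refines hST (hE i hi)

theorem condPrTest_mono_general {d : ℕ} (ρ : Matrix (Fin d) (Fin d) ℂ) (hρ : IsDensityOp ρ)
    (n : ℕ) (Ms : ℕ → Measurement d) (E : ℕ → QEvent d)
    (hE : ∀ k ∈ Finset.Icc 1 n, (E k).meas = Ms k)
    (K L J : Finset ℕ) (hJ : J ⊆ L) :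
    condPrTest ρ n Ms E L K ≤ condPrTest ρ n Ms E J K := by
  have hρ₀ : 0 ≤ ρ := hρ.1.nonneg
  exact div_le_div_of_nonneg_right (PrTest_anti hρ₀ hE (union_subset_union_right hJ))
    (PrSeq_nonneg hρ₀ _)

/-- Proposition 3.2, Monotonicity in a test: for subsequences `K < L`
of `(n]` and any subsequence `J` of `L`, `Pr_Σ[𝔼_L | 𝔼_K] ≤ Pr_Σ[𝔼_J | 𝔼_K]`. -/
theorem condPrTest_mono {d : ℕ} (ρ : Matrix (Fin d) (Fin d) ℂ) (hρ : IsDensityOp ρ)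
    (n : ℕ) (Ms : ℕ → Measurement d) (E : ℕ → QEvent d)
    (hE : ∀ k ∈ Finset.Icc 1 n, (E k).meas = Ms k)
    (K L J : Finset ℕ) (hK : K ⊆ Finset.Icc 1 n) (hL : L ⊆ Finset.Icc 1 n)
    (hKL : ∀ k ∈ K, ∀ l ∈ L, k < l) (hJ : J ⊆ L)
    (hne : PrTest ρ n Ms E K ≠ 0) :
    condPrTest ρ n Ms E L K ≤ condPrTest ρ n Ms E J K :=
  condPrTest_mono_general ρ hρ n Ms E hE K L J hJ
end

section
/- Let Σ = (ρ; M_1,…,M_n) be a test on a finite-dimensional complex Hilbert space H, let E_1,…,E_n be events with E_i defined by M_i for each i, let K be a subsequence of (n] with K < i ≤ n, and let J be a subsequence of K, with Pr_Σ[𝔼_K] ≠ 0 and Pr_Σ[𝔼_{K∖J}] ≠ 0. Suppose E_i^{(1)} = {M_i ∈ A_1} and E_i^{(2)} = {M_i ∈ A_2} with A_1 ∩ A_2 = ∅, and both Ind_Σ(E_i^{(1)} | 𝔼_J; 𝔼_{K∖J}) and Ind_Σ(E_i^{(2)} | 𝔼_J; 𝔼_{K∖J}) hold. Then Ind_Σ(E_i^{(1)}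 ∪ E_i^{(2)} | 𝔼_J; 𝔼_{K∖J}) holds, where E_i^{(1)} ∪ E_i^{(2)} = {M_i ∈ A_1 ∪ A_2}. -/
open Matrix Finset
open scoped ComplexOrder

/-! Since superoperators are linear and the event at index `i` occupies exactly one slot of
the sequence realizing `Pr_Σ[𝔼_K, E_i]`, this probability is additive in `E_i` over disjoint
outcome sets, while `Pr_Σ[𝔼_K]` does not involve `E_i` at all because `i ∉ K`. So both
conditional probabilities in `Ind` are additive, and the two hypotheses add up. -/

lemma QEvent.superop_add {d : ℕ} (E : QEvent d) (σ τ : Matrix (Fin d) (Fin d) ℂ) :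
    E.superop (σ + τ) = E.superop σ + E.superop τ := by
  simp only [QEvent.superop, mul_add, add_mul, sum_add_distrib]

lemma QEvent.superop_union {d : ℕ} (M : Measurement d) {A₁ A₂ : Finset ℕ}
    (h₁ : A₁ ⊆ M.spec) (h₂ : A₂ ⊆ M.spec) (hdisj : Disjoint A₁ A₂)
    (σ : Matrix (Fin d) (Fin d) ℂ) :
    QEvent.superop ⟨M, A₁ ∪ A₂, union_subset h₁ h₂⟩ σ =
      QEvent.superop ⟨M, A₁, h₁⟩ σ + QEvent.superop ⟨M, A₂, h₂⟩ σ :=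
  sum_union hdisj

lemma foldl_superop_add {d : ℕ} (Es : List (QEvent d)) (σ τ : Matrix (Fin d) (Fin d) ℂ) :
    Es.foldl (fun σ E => E.superop σ) (σ + τ) =
      Es.foldl (fun σ E => E.superop σ) σ + Es.foldl (fun σ E => E.superop σ) τ := by
  induction Es generalizing σ τ with
  | nil => rfl
  | cons E Es ih => simp only [List.foldl_cons, E.superop_add, ih]

lemma PrSeq_append_cons_union {d : ℕ} (ρ : Matrix (Fin d) (Fin d) ℂ) (L R : List (QEvent d))
    (M : Measurement d) {A₁ A₂ : Finset ℕ} (h₁ : A₁ ⊆ M.spec) (h₂ : A₂ ⊆ M.spec)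
    (hdisj : Disjoint A₁ A₂) :
    PrSeq ρ (L ++ ⟨M, A₁ ∪ A₂, union_subset h₁ h₂⟩ :: R) =
      PrSeq ρ (L ++ ⟨M, A₁, h₁⟩ :: R) + PrSeq ρ (L ++ ⟨M, A₂, h₂⟩ :: R) := by
  simp only [PrSeq, List.foldl_append, List.foldl_cons, QEvent.superop_union M h₁ h₂ hdisj,
    foldl_superop_add, trace_add, Complex.add_re]

lemma testList_update_of_notMem {d : ℕ} (n : ℕ) (Ms : ℕ → Measurement d) (E : ℕ → QEvent d)
    {K : Finset ℕ} {i : ℕ} (hi : i ∉ K) (F : QEvent d) :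
    testList n Ms (Function.update E i F) K = testList n Ms E K := by
  refine List.map_congr_left fun x _ => ?_
  by_cases hx : x ∈ K
  · rw [if_pos hx, if_pos hx, Function.update_of_ne (ne_of_mem_of_not_mem hx hi)]
  · rw [if_neg hx, if_neg hx]

lemma exists_testList_update_eq_append_cons {d : ℕ} (n : ℕ) (Ms : ℕ → Measurement d)
    (E : ℕ → QEvent d) {K : Finset ℕ} {i : ℕ} (hiK : i ∈ K) (hi : i ∈ Icc 1 n) :
    ∃ L R : List (QEvent d), ∀ F : QEvent d,
      testList n Ms (Function.update E i F) K = L ++ F :: R := by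
  set g : ℕ → QEvent d := fun x => if x ∈ K then E x else completeEvent (Ms x)
  set idx := (List.range' 1 n).filter (fun x => decide (∃ k ∈ K, x ≤ k))
  have hnodup : idx.Nodup := (List.nodup_range' ..).filter _
  have hmem : i ∈ idx := by
    rw [mem_Icc] at hi
    simp only [idx, List.mem_filter, List.mem_range'_1, decide_eq_true_eq]
    exact ⟨by omega, i, hiK, le_rfl⟩
  obtain ⟨l₁, l₂, hsplit⟩ := List.append_of_mem hmem
  have hnotMem : i ∉ l₁ ∧ i ∉ l₂ := by
    have := hsplit ▸ hnodup
    rw [List.nodup_append, List.nodup_cons] at this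
    exact ⟨fun h => this.2.2 i h i List.mem_cons_self rfl, this.2.1.1⟩
  have hoff : ∀ (F : QEvent d) (l : List ℕ), i ∉ l →
      l.map (fun x => if x ∈ K then Function.update E i F x else completeEvent (Ms x)) =
        l.map g := fun F l hl =>
    List.map_congr_left fun x hx => by
      simp only [g, Function.update_of_ne (ne_of_mem_of_not_mem hx hl)]
  refine ⟨l₁.map g, l₂.map g, fun F => ?_⟩
  change idx.map _ = _
  rw [hsplit, List.map_append, List.map_cons, hoff F l₁ hnotMem.1, hoff F l₂ hnotMem.2,
    if_pos hiK, Function.update_self]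

lemma condPrTest_update_union {d : ℕ} (ρ : Matrix (Fin d) (Fin d) ℂ) (n : ℕ)
    (Ms : ℕ → Measurement d) (E : ℕ → QEvent d) {K : Finset ℕ} {i : ℕ} (hiK : i ∉ K)
    (hi : i ∈ Icc 1 n) (M : Measurement d) {A₁ A₂ : Finset ℕ} (h₁ : A₁ ⊆ M.spec)
    (h₂ : A₂ ⊆ M.spec) (hdisj : Disjoint A₁ A₂) :
    condPrTest ρ n Ms (Function.update E i ⟨M, A₁ ∪ A₂, union_subset h₁ h₂⟩) {i} K =
      condPrTest ρ n Ms (Function.update E i ⟨M, A₁, h₁⟩) {i} K +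
        condPrTest ρ n Ms (Function.update E i ⟨M, A₂, h₂⟩) {i} K := by
  obtain ⟨L, R, hsplit⟩ :=
    exists_testList_update_eq_append_cons n Ms E (mem_union_right K (mem_singleton_self i)) hi
  simp only [condPrTest, PrTest, hsplit, testList_update_of_notMem n Ms E hiK,
    PrSeq_append_cons_union ρ L R M h₁ h₂ hdisj, add_div]

theorem indTest_union_general {d : ℕ} (ρ : Matrix (Fin d) (Fin d) ℂ)
    (n : ℕ) (Ms : ℕ → Measurement d) (E : ℕ → QEvent d)
    (K : Finset ℕ)
    (i : ℕ) (hi : i ∈ Finset.Icc 1 n) (hKi : ∀ k ∈ K, k < i)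
    (J : Finset ℕ)
    (A₁ A₂ : Finset ℕ) (h₁ : A₁ ⊆ (Ms i).spec) (h₂ : A₂ ⊆ (Ms i).spec)
    (hdisj : A₁ ∩ A₂ = ∅)
    (hind₁ : IndTest ρ n Ms (Function.update E i ⟨Ms i, A₁, h₁⟩) i J K)
    (hind₂ : IndTest ρ n Ms (Function.update E i ⟨Ms i, A₂, h₂⟩) i J K) :
    IndTest ρ n Ms
      (Function.update E i ⟨Ms i, A₁ ∪ A₂, Finset.union_subset h₁ h₂⟩) i J K := by
  have hiK : i ∉ K := fun h => lt_irrefl i (hKi i h)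
  have hiKJ : i ∉ K \ J := fun h => hiK (mem_sdiff.mp h).1
  have hdisj' := disjoint_iff_inter_eq_empty.mpr hdisj
  unfold IndTest at hind₁ hind₂ ⊢
  rw [condPrTest_update_union ρ n Ms E hiK hi (Ms i) h₁ h₂ hdisj',
    condPrTest_update_union ρ n Ms E hiKJ hi (Ms i) h₁ h₂ hdisj', hind₁, hind₂]

/-- Proposition 4.4: if `E_i⁽¹⁾ = {M_i ∈ A₁}` and `E_i⁽²⁾ = {M_i ∈ A₂}`
with `A₁ ∩ A₂ = ∅`, and both `Ind_Σ(E_i⁽¹⁾ | 𝔼_J; 𝔼_{K∖J})` and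
`Ind_Σ(E_i⁽²⁾ | 𝔼_J; 𝔼_{K∖J})` hold, then `Ind_Σ(E_i⁽¹⁾ ∪ E_i⁽²⁾ | 𝔼_J; 𝔼_{K∖J})`. -/
theorem indTest_union {d : ℕ} (ρ : Matrix (Fin d) (Fin d) ℂ) (hρ : IsDensityOp ρ)
    (n : ℕ) (Ms : ℕ → Measurement d) (E : ℕ → QEvent d)
    (hE : ∀ k ∈ Finset.Icc 1 n, (E k).meas = Ms k)
    (K : Finset ℕ) (hK : K ⊆ Finset.Icc 1 n)
    (i : ℕ) (hi : i ∈ Finset.Icc 1 n) (hKi : ∀ k ∈ K, k < i)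
    (J : Finset ℕ) (hJ : J ⊆ K)
    (hne : PrTest ρ n Ms E K ≠ 0) (hne' : PrTest ρ n Ms E (K \ J) ≠ 0)
    (A₁ A₂ : Finset ℕ) (h₁ : A₁ ⊆ (Ms i).spec) (h₂ : A₂ ⊆ (Ms i).spec)
    (hdisj : A₁ ∩ A₂ = ∅)
    (hind₁ : IndTest ρ n Ms (Function.update E i ⟨Ms i, A₁, h₁⟩) i J K)
    (hind₂ : IndTest ρ n Ms (Function.update E i ⟨Ms i, A₂, h₂⟩) i J K) :
    IndTest ρ n Ms
      (Function.update E i ⟨Ms i, A₁ ∪ A₂, Finset.union_subset h₁ h₂⟩) i J K :=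
  indTest_union_general ρ n Ms E K i hi hKi J A₁ A₂ h₁ h₂ hdisj hind₁ hind₂
end
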